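/- Fix d ≥ 2. For 0 ≤ i ≤ d let p_i ∈ ℂ[k] be the polynomial p_i(k) = ∏_{j=0}^{i−1}(k + 2j) (so p_0 = 1), and let A be the (d+1)×(d+1) matrix over ℂ with A_{j,i} equal to the coefficient of k^i in p_j, for 0 ≤ i, j ≤ d. Then A is invertible, and, setting ℓ_j = ∑_{i=0}^{d} (A^{-1})_{j,i}·m_i ∈ ℂ[m_0,…,m_d] for 0 ≤ j ≤ d, the ideal generated by the 2×2 minors of the 2×d matrix whose (1,c) entry is ℓ_{c−1} and whose (2,c) entry is ℓ_c (for c = 1,…,d) is prime and equals the vanishing ideal of the affine cone C_χ = { t·(p_0(k), p_1(k), …, p_d(k)) ∈ ℂ^{d+1} : t, k ∈ ℂ } over the chi-squared moment parameterization. In particular, the chi-squared moment variety M_d^χ ⊆ ℙ^d is a rational normal curve (the image of the standard rational normal curve under the linear change of coordinates given by A). -/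
import Mathlib


open MvPolynomial

/-- The polynomial `pᵢ(k) = ∏_{j=0}^{i-1}(k + 2j) ∈ ℂ[k]`, the `i`-th moment of the
chi-squared distribution as a polynomial in the parameter `k`. -/
noncomputable def chiSqMomentPoly (i : ℕ) : Polynomial ℂ :=
  ∏ j ∈ Finset.range i, (Polynomial.X + Polynomial.C (2 * (j : ℂ)))

/-- The `(d+1) × (d+1)` matrix `A` over `ℂ` whose `(j, i)` entry is the coefficient of
`kⁱ` in `p_j`. -/
noncomputable def chiSqCoeffMatrix (d : ℕ) : Matrix (Fin (d + 1)) (Fin (d + 1)) ℂ :=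
  Matrix.of fun j i => (chiSqMomentPoly j.val).coeff i.val

/-- The linear forms `ℓ_j = ∑ᵢ (A⁻¹)_{j,i}·mᵢ ∈ ℂ[m₀,…,m_d]`. -/
noncomputable def chiSqLinearForm (d : ℕ) (j : Fin (d + 1)) :
    MvPolynomial (Fin (d + 1)) ℂ :=
  ∑ i : Fin (d + 1), C ((chiSqCoeffMatrix d)⁻¹ j i) * X i

/-- The `2 × d` matrix whose `c`-th column, for `1 ≤ c ≤ d`, is `(ℓ_{c-1}, ℓ_c)ᵀ`. -/
noncomputable def chiSqMatrix (d : ℕ) :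
    Matrix (Fin 2) (Fin d) (MvPolynomial (Fin (d + 1)) ℂ) :=
  Matrix.of fun r c =>
    ![chiSqLinearForm d ⟨c.val, by have := c.isLt; omega⟩,
      chiSqLinearForm d ⟨c.val + 1, by have := c.isLt; omega⟩] r

/-- The ideal generated by all `2 × 2` minors of the matrix `(ℓ_{c-1}; ℓ_c)_c`. -/
noncomputable def chiSqIdeal (d : ℕ) : Ideal (MvPolynomial (Fin (d + 1)) ℂ) :=
  Ideal.span
    { p | ∃ s : Fin 2 → Fin d, StrictMono s ∧ p = ((chiSqMatrix d).submatrix id s).det }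

/-! ### Auxiliary development -/

namespace ChiSqAux

lemma chiSqMomentPoly_monic (i : ℕ) : (chiSqMomentPoly i).Monic := by
  apply Polynomial.monic_prod_of_monic
  intro j _
  exact Polynomial.monic_X_add_C _

lemma chiSqMomentPoly_natDegree (i : ℕ) : (chiSqMomentPoly i).natDegree = i := by
  rw [chiSqMomentPoly, Polynomial.natDegree_prod]
  · simp only [Polynomial.natDegree_X_add_C]
    simp
  · intro j _
    exact (Polynomial.monic_X_add_C _).ne_zero

lemma chiSq_det (d : ℕ) : (chiSqCoeffMatrix d).det = 1 := by
  rw [Matrix.det_of_lowerTriangular]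
  · apply Finset.prod_eq_one
    intro j _
    show (chiSqMomentPoly j.val).coeff j.val = 1
    have := (chiSqMomentPoly_monic j.val).coeff_natDegree
    rwa [chiSqMomentPoly_natDegree] at this
  · intro i j hij
    show (chiSqMomentPoly i.val).coeff j.val = 0
    apply Polynomial.coeff_eq_zero_of_natDegree_lt
    rw [chiSqMomentPoly_natDegree]
    exact hij

lemma chiSq_isUnit_det (d : ℕ) : IsUnit (chiSqCoeffMatrix d).det := by
  rw [chiSq_det]; exact isUnit_one

variable (d : ℕ)

/-- The substitution `Xᵢ ↦ t·kⁱ` (with `t = X 0`, `k = X 1`). -/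
noncomputable def psi : MvPolynomial (Fin (d + 1)) ℂ →ₐ[ℂ] MvPolynomial (Fin 2) ℂ :=
  aeval (fun i : Fin (d + 1) => X 0 * X 1 ^ (i : ℕ))

/-- The standard matrix of the rational normal curve. -/
noncomputable def stdMatrix :
    Matrix (Fin 2) (Fin d) (MvPolynomial (Fin (d + 1)) ℂ) :=
  Matrix.of fun r c =>
    ![X ⟨c.val, by have := c.isLt; omega⟩, X ⟨c.val + 1, by have := c.isLt; omega⟩] r

/-- The standard ideal of `2×2` minors. -/
noncomputable def J : Ideal (MvPolynomial (Fin (d + 1)) ℂ) :=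
  Ideal.span
    { p | ∃ s : Fin 2 → Fin d, StrictMono s ∧ p = ((stdMatrix d).submatrix id s).det }

noncomputable def sigm : MvPolynomial (Fin (d + 1)) ℂ →ₐ[ℂ] MvPolynomial (Fin (d + 1)) ℂ :=
  aeval (chiSqLinearForm d)

noncomputable def tau : MvPolynomial (Fin (d + 1)) ℂ →ₐ[ℂ] MvPolynomial (Fin (d + 1)) ℂ :=
  aeval (fun j : Fin (d + 1) => ∑ i : Fin (d + 1), C (chiSqCoeffMatrix d j i) * X i)

lemma sum_C_mul_sum (B B' : Matrix (Fin (d+1)) (Fin (d+1)) ℂ) (j : Fin (d+1)) :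
    ∑ i : Fin (d+1), C (B j i) * (∑ l : Fin (d+1), C (B' i l) * X l)
      = ∑ l : Fin (d+1), C ((B * B') j l) * (X l : MvPolynomial (Fin (d+1)) ℂ) := by
  simp only [Finset.mul_sum]
  rw [Finset.sum_comm]
  simp only [Matrix.mul_apply, map_sum, Finset.sum_mul, C_mul, mul_assoc]

lemma sum_C_one_mul (j : Fin (d+1)) :
    ∑ l : Fin (d+1), C ((1 : Matrix (Fin (d+1)) (Fin (d+1)) ℂ) j l)
      * (X l : MvPolynomial (Fin (d+1)) ℂ) = X j := by
  simp [Matrix.one_apply, apply_ite C]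

lemma tau_sigm_X (j : Fin (d + 1)) : tau d (sigm d (X j)) = X j := by
  simp only [sigm, aeval_X, chiSqLinearForm, map_sum, map_mul, aeval_C, tau,
    algebraMap_eq]
  rw [sum_C_mul_sum, Matrix.nonsing_inv_mul _ (chiSq_isUnit_det d), sum_C_one_mul]

lemma sigm_tau_X (j : Fin (d + 1)) : sigm d (tau d (X j)) = X j := by
  simp only [sigm, aeval_X, chiSqLinearForm, map_sum, map_mul, aeval_C, tau,
    algebraMap_eq]
  rw [sum_C_mul_sum, Matrix.mul_nonsing_inv _ (chiSq_isUnit_det d), sum_C_one_mul]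

lemma tau_sigm (f : MvPolynomial (Fin (d + 1)) ℂ) : tau d (sigm d f) = f := by
  have : (tau d).comp (sigm d) = AlgHom.id ℂ _ := by
    apply MvPolynomial.algHom_ext
    intro i
    simpa using tau_sigm_X d i
  calc tau d (sigm d f) = ((tau d).comp (sigm d)) f := rfl
    _ = f := by rw [this]; rfl

lemma sigm_tau (f : MvPolynomial (Fin (d + 1)) ℂ) : sigm d (tau d f) = f := by
  have : (sigm d).comp (tau d) = AlgHom.id ℂ _ := by
    apply MvPolynomial.algHom_ext
    intro i
    simpa using sigm_tau_X d i
  calc sigm d (tau d f) = ((sigm d).comp (tau d)) f := rfl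
    _ = f := by rw [this]; rfl

lemma sigm_det (s : Fin 2 → Fin d) :
    sigm d ((stdMatrix d).submatrix id s).det = ((chiSqMatrix d).submatrix id s).det := by
  rw [show sigm d ((stdMatrix d).submatrix id s).det
      = (((stdMatrix d).submatrix id s).map (sigm d)).det from
    RingHom.map_det (sigm d).toRingHom ((stdMatrix d).submatrix id s)]
  congr 1
  ext r c
  fin_cases r <;>
    simp [stdMatrix, chiSqMatrix, sigm, aeval_X, Matrix.submatrix_apply, Matrix.map_apply]

lemma chiSqIdeal_eq_map : chiSqIdeal d = Ideal.map (sigm d) (J d) := by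
  have hset : (sigm d) '' { p | ∃ s : Fin 2 → Fin d, StrictMono s ∧
        p = ((stdMatrix d).submatrix id s).det }
      = { p | ∃ s : Fin 2 → Fin d, StrictMono s ∧
        p = ((chiSqMatrix d).submatrix id s).det } := by
    ext p
    constructor
    · rintro ⟨q, ⟨s, hs, rfl⟩, rfl⟩
      exact ⟨s, hs, (sigm_det d s)⟩
    · rintro ⟨s, hs, rfl⟩
      exact ⟨_, ⟨s, hs, rfl⟩, sigm_det d s⟩
  rw [chiSqIdeal, J, Ideal.map_span, hset]

/-- `ψ` kills the standard minors. -/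
lemma J_le_ker : J d ≤ RingHom.ker (psi d).toRingHom := by
  rw [J, Ideal.span_le]
  rintro p ⟨s, hs, rfl⟩
  rw [SetLike.mem_coe, RingHom.mem_ker]
  show psi d ((stdMatrix d).submatrix id s).det = 0
  rw [Matrix.det_fin_two]
  simp only [Matrix.submatrix_apply, id_eq, stdMatrix, Matrix.of_apply,
    Matrix.cons_val', Matrix.cons_val_zero, Matrix.cons_val_one, Matrix.head_cons,
    Matrix.empty_val', Matrix.cons_val_fin_one, map_sub, map_mul, psi, aeval_X]
  ring

/-- weighted sum of an exponent vector -/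
def wsum (w : Fin (d+1) → ℕ) (e : Fin (d+1) →₀ ℕ) : ℕ := ∑ i, e i * w i

lemma wsum_add (w : Fin (d+1) → ℕ) (e e' : Fin (d+1) →₀ ℕ) :
    wsum d w (e + e') = wsum d w e + wsum d w e' := by
  simp [wsum, add_mul, Finset.sum_add_distrib]

lemma wsum_single (w : Fin (d+1) → ℕ) (a : Fin (d+1)) (k : ℕ) :
    wsum d w (Finsupp.single a k) = k * w a := by
  rw [wsum, Finset.sum_eq_single a]
  · simp
  · intro b _ hb
    simp [Finsupp.single_apply, Ne.symm hb]
  · simp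

def degE (e : Fin (d+1) →₀ ℕ) : ℕ := wsum d (fun _ => 1) e
def wtE (e : Fin (d+1) →₀ ℕ) : ℕ := wsum d (fun i => i.val) e
def phiE (e : Fin (d+1) →₀ ℕ) : ℕ := wsum d (fun i => i.val * (d - i.val)) e

lemma wtE_le (e : Fin (d+1) →₀ ℕ) : wtE d e ≤ degE d e * d := by
  rw [wtE, degE, wsum, wsum, Finset.sum_mul]
  apply Finset.sum_le_sum
  intro i _
  have : i.val ≤ d := by omega
  calc e i * i.val ≤ e i * d := Nat.mul_le_mul_left _ this
    _ = e i * 1 * d := by ring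

/-- normal form exponent vector for total degree `n`, weight `m` -/
noncomputable def nf (hd : 0 < d) (n m : ℕ) : Fin (d+1) →₀ ℕ :=
  if m % d = 0 then
    Finsupp.single 0 (n - m / d) + Finsupp.single (Fin.last d) (m / d)
  else
    Finsupp.single 0 (n - m / d - 1) + Finsupp.single ⟨m % d, by have := Nat.mod_lt m hd; omega⟩ 1
      + Finsupp.single (Fin.last d) (m / d)

lemma div_lt_of_ne (n m : ℕ) (hm : m ≤ n * d) (hq : m % d ≠ 0) : m / d < n := by
  rcases Nat.lt_or_ge (m / d) n with h | h
  · exact h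
  · exfalso
    have h1 : n * d ≤ (m / d) * d := Nat.mul_le_mul_right d h
    have h2 := Nat.mod_add_div m d
    have h4 : (m / d) * d = d * (m / d) := Nat.mul_comm _ _
    have h3 : m = n * d := by omega
    rw [h3, Nat.mul_mod_left] at hq
    exact hq rfl

lemma degE_nf (hd : 0 < d) (n m : ℕ) (hm : m ≤ n * d) : degE d (nf d hd n m) = n := by
  have hdiv : m / d ≤ n := by
    have := Nat.div_le_div_right (c := d) hm
    rwa [Nat.mul_div_cancel n hd] at this
  rw [nf]
  split_ifs with h
  · rw [degE, wsum_add, ← degE, ← degE, degE, degE, wsum_single, wsum_single]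
    omega
  · have := div_lt_of_ne d n m hm h
    rw [degE, wsum_add, wsum_add, wsum_single, wsum_single, wsum_single]
    omega

lemma wtE_nf (hd : 0 < d) (n m : ℕ) (hm : m ≤ n * d) : wtE d (nf d hd n m) = m := by
  have h2 := Nat.mod_add_div m d
  have h4 : (m / d) * d = d * (m / d) := Nat.mul_comm _ _
  rw [nf]
  split_ifs with h
  · rw [wtE, wsum_add, wsum_single, wsum_single]
    simp only [Fin.val_zero, Fin.val_last]
    omega
  · rw [wtE, wsum_add, wsum_add, wsum_single, wsum_single, wsum_single]
    simp only [Fin.val_zero, Fin.val_last]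
    show (n - m / d - 1) * 0 + 1 * (m % d) + m / d * d = m
    omega

/-- interior indices -/
def Iset : Finset (Fin (d+1)) := Finset.univ.filter (fun i => i ≠ 0 ∧ i ≠ Fin.last d)

def intSum (e : Fin (d+1) →₀ ℕ) : ℕ := ∑ i ∈ Iset d, e i

lemma interior_zero_or_one (e : Fin (d+1) →₀ ℕ) (h : intSum d e ≤ 1) :
    (∀ i ∈ Iset d, e i = 0) ∨
    (∃ q ∈ Iset d, e q = 1 ∧ ∀ i ∈ Iset d, i ≠ q → e i = 0) := by
  by_cases h0 : ∀ i ∈ Iset d, e i = 0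
  · exact Or.inl h0
  · right
    push_neg at h0
    obtain ⟨q, hq, hq0⟩ := h0
    have hsplit : intSum d e = e q + ∑ i ∈ (Iset d).erase q, e i := by
      rw [intSum, ← Finset.add_sum_erase _ _ hq]
    have h1 : e q = 1 ∧ ∑ i ∈ (Iset d).erase q, e i = 0 := by omega
    refine ⟨q, hq, h1.1, ?_⟩
    intro i hi hiq
    have := Finset.sum_eq_zero_iff.mp h1.2 i (Finset.mem_erase.mpr ⟨hiq, hi⟩)
    exact this

lemma mem_Iset_iff (i : Fin (d+1)) : i ∈ Iset d ↔ i ≠ 0 ∧ i ≠ Fin.last d := by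
  simp [Iset]

lemma degE_eval (e : Fin (d+1) →₀ ℕ) : True := trivial

/-- base case: a normal exponent vector equals its normal form -/
lemma normal_eq_nf (hd : 0 < d) (e : Fin (d+1) →₀ ℕ) (h : intSum d e ≤ 1) :
    e = nf d hd (degE d e) (wtE d e) := by
  have h0l : (0 : Fin (d+1)) ≠ Fin.last d := by
    intro hc
    have := congrArg Fin.val hc
    rw [Fin.val_zero, Fin.val_last] at this
    omega
  rcases interior_zero_or_one d e h with h0 | ⟨q, hq, hq1, hq0⟩
  · -- e supported on {0, last}
    set a := e 0 with ha
    set b := e (Fin.last d) with hb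
    have he : e = Finsupp.single 0 a + Finsupp.single (Fin.last d) b := by
      ext i
      rw [Finsupp.add_apply, Finsupp.single_apply, Finsupp.single_apply]
      by_cases hi0 : i = 0
      · subst hi0
        rw [if_pos rfl, if_neg (Ne.symm h0l)]
        omega
      · by_cases hil : i = Fin.last d
        · subst hil
          rw [if_neg h0l, if_pos rfl]
          omega
        · rw [if_neg (fun hc => hi0 hc.symm), if_neg (fun hc => hil hc.symm)]
          exact h0 i ((mem_Iset_iff d i).mpr ⟨hi0, hil⟩)
    have hdeg : degE d e = a + b := by
      rw [he, degE, wsum_add, wsum_single, wsum_single]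
      omega
    have hwt : wtE d e = b * d := by
      rw [he, wtE, wsum_add, wsum_single, wsum_single, Fin.val_zero, Fin.val_last]
      omega
    rw [hdeg, hwt, nf]
    rw [if_pos (Nat.mul_mod_left b d), Nat.mul_div_cancel _ hd]
    rw [show a + b - b = a by omega, ← he]
  · -- one interior index q with multiplicity 1
    obtain ⟨hq0', hqL⟩ := (mem_Iset_iff d q).mp hq
    have hqv : 0 < q.val ∧ q.val < d := by
      constructor
      · rcases Nat.eq_zero_or_pos q.val with h' | h'
        · exact absurd (Fin.ext (by rw [h', Fin.val_zero])) hq0'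
        · exact h'
      · rcases Nat.lt_or_ge q.val d with h' | h'
        · exact h'
        · have : q.val < d + 1 := q.isLt
          exact absurd (Fin.ext (by rw [Fin.val_last]; omega)) hqL
    set a := e 0 with ha
    set b := e (Fin.last d) with hb
    have he : e = Finsupp.single 0 a + Finsupp.single q 1
        + Finsupp.single (Fin.last d) b := by
      ext i
      rw [Finsupp.add_apply, Finsupp.add_apply, Finsupp.single_apply,
        Finsupp.single_apply, Finsupp.single_apply]
      by_cases hi0 : i = 0
      · subst hi0
        rw [if_pos rfl, if_neg hq0', if_neg (Ne.symm h0l)]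
        omega
      · by_cases hiq : i = q
        · subst hiq
          rw [if_neg (fun hc => hi0 hc.symm), if_pos rfl, if_neg (fun hc => hqL hc.symm)]
          omega
        · by_cases hil : i = Fin.last d
          · subst hil
            rw [if_neg h0l, if_neg (fun hc => hqL hc), if_pos rfl]
            omega
          · rw [if_neg (fun hc => hi0 hc.symm), if_neg (fun hc => hiq hc.symm),
              if_neg (fun hc => hil hc.symm)]
            exact hq0 i ((mem_Iset_iff d i).mpr ⟨hi0, hil⟩) hiq
    have hdeg : degE d e = a + 1 + b := by
      rw [he, degE, wsum_add, wsum_add, wsum_single, wsum_single, wsum_single]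
      omega
    have hwt : wtE d e = q.val + b * d := by
      rw [he, wtE, wsum_add, wsum_add, wsum_single, wsum_single, wsum_single,
        Fin.val_zero, Fin.val_last]
      omega
    have hmod : (q.val + b * d) % d = q.val := by
      rw [Nat.add_mul_mod_self_right]
      exact Nat.mod_eq_of_lt hqv.2
    have hdiv : (q.val + b * d) / d = b := by
      rw [Nat.add_mul_div_right _ _ hd, Nat.div_eq_of_lt hqv.2]
      omega
    rw [hdeg, hwt, nf, if_neg (by omega : ¬ (q.val + b * d) % d = 0), hdiv]
    have h2 : (⟨(q.val + b * d) % d,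
        by have := Nat.mod_lt (q.val + b * d) hd; omega⟩ : Fin (d+1)) = q :=
      Fin.ext hmod
    rw [h2, show a + 1 + b - b - 1 = a by omega, ← he]

lemma mem_Iset_val (i : Fin (d+1)) (hi : i ∈ Iset d) : 0 < i.val ∧ i.val < d := by
  obtain ⟨h1, h2⟩ := (mem_Iset_iff d i).mp hi
  constructor
  · rcases Nat.eq_zero_or_pos i.val with h' | h'
    · exact absurd (Fin.ext (by rw [h', Fin.val_zero])) h1
    · exact h'
  · rcases Nat.lt_or_ge i.val d with h' | h'
    · exact h'
    · have := i.isLt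
      exact absurd (Fin.ext (by rw [Fin.val_last]; omega)) h2

lemma intSum_le_one_of_phi_zero (e : Fin (d+1) →₀ ℕ) (hphi : phiE d e = 0) :
    intSum d e ≤ 1 := by
  have : ∀ i ∈ Iset d, e i = 0 := by
    intro i hi
    obtain ⟨h1, h2⟩ := mem_Iset_val d i hi
    by_contra hne
    have hterm : e i * (i.val * (d - i.val)) ≤ phiE d e := by
      rw [phiE, wsum]
      exact Finset.single_le_sum (f := fun i => e i * (i.val * (d - i.val)))
        (fun _ _ => Nat.zero_le _) (Finset.mem_univ i)
    have : 1 ≤ e i * (i.val * (d - i.val)) :=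
      Nat.one_le_iff_ne_zero.mpr (by
        apply Nat.mul_ne_zero hne
        apply Nat.mul_ne_zero <;> omega)
    omega
  rw [intSum, Finset.sum_eq_zero this]
  omega

lemma step_ineq (iv jv : ℕ) (h1 : 1 ≤ iv) (h2 : iv ≤ jv) (h3 : jv < d) :
    (iv-1)*(d-(iv-1)) + (jv+1)*(d-(jv+1)) + 2 ≤ iv*(d-iv) + jv*(d-jv) := by
  zify [show iv - 1 ≤ d by omega, show iv ≤ d by omega, show jv + 1 ≤ d by omega,
    show jv ≤ d by omega, h1]
  nlinarith [h2]

lemma monomial_mul_X (u : Fin (d+1) →₀ ℕ) (k : Fin (d+1)) :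
    (monomial u (1:ℂ) : MvPolynomial (Fin (d+1)) ℂ) * X k
      = monomial (u + Finsupp.single k 1) 1 := by
  have hX : (X k : MvPolynomial (Fin (d+1)) ℂ) = monomial (Finsupp.single k 1) 1 := by
    rw [← MvPolynomial.X_pow_eq_monomial, pow_one]
  rw [hX, monomial_mul, one_mul]

lemma reduce (hd : 0 < d) (N : ℕ) :
    ∀ e : Fin (d+1) →₀ ℕ, phiE d e ≤ N →
    (monomial e 1 : MvPolynomial (Fin (d+1)) ℂ)
      - monomial (nf d hd (degE d e) (wtE d e)) 1 ∈ J d := by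
  induction N with
  | zero =>
    intro e he
    have h1 : intSum d e ≤ 1 := intSum_le_one_of_phi_zero d e (by omega)
    rw [← normal_eq_nf d hd e h1, sub_self]
    exact Ideal.zero_mem _
  | succ N ih =>
    intro e he
    by_cases h1 : intSum d e ≤ 1
    · rw [← normal_eq_nf d hd e h1, sub_self]
      exact Ideal.zero_mem _
    · -- inductive step
      push_neg at h1
      set T := (Iset d).filter (fun i => e i ≠ 0) with hT
      have hsumT : ∑ i ∈ T, e i = intSum d e := by
        rw [hT, intSum]
        exact Finset.sum_filter_ne_zero _
      have hTne : T.Nonempty := by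
        by_contra hc
        rw [Finset.not_nonempty_iff_eq_empty] at hc
        rw [hc] at hsumT
        simp at hsumT
        omega
      set i0 := T.min' hTne with hi0
      set j0 := T.max' hTne with hj0
      have hi0T : i0 ∈ T := Finset.min'_mem _ _
      have hj0T : j0 ∈ T := Finset.max'_mem _ _
      have hij : i0 ≤ j0 := Finset.min'_le _ _ hj0T
      have hi0I : i0 ∈ Iset d := (Finset.mem_filter.mp hi0T).1
      have hj0I : j0 ∈ Iset d := (Finset.mem_filter.mp hj0T).1
      have hei0 : 1 ≤ e i0 := Nat.one_le_iff_ne_zero.mpr (Finset.mem_filter.mp hi0T).2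
      have hej0 : 1 ≤ e j0 := Nat.one_le_iff_ne_zero.mpr (Finset.mem_filter.mp hj0T).2
      obtain ⟨hiv1, hiv2⟩ := mem_Iset_val d i0 hi0I
      obtain ⟨hjv1, hjv2⟩ := mem_Iset_val d j0 hj0I
      have hijv : i0.val ≤ j0.val := hij
      have hkey : i0 = j0 → 2 ≤ e i0 := by
        intro hij0
        have hTsub : T ⊆ {i0} := by
          intro x hx
          rw [Finset.mem_singleton]
          have hx1 : i0 ≤ x := Finset.min'_le _ _ hx
          have hx2 : x ≤ j0 := Finset.le_max' _ _ hx
          rw [← hij0] at hx2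
          exact le_antisymm hx2 hx1
        have : ∑ i ∈ T, e i ≤ ∑ i ∈ ({i0} : Finset (Fin (d+1))), e i :=
          Finset.sum_le_sum_of_subset hTsub
        rw [Finset.sum_singleton] at this
        omega
      -- the modified exponent vector
      set e' := e - Finsupp.single i0 1 - Finsupp.single j0 1 with he'
      have he : e = e' + Finsupp.single i0 1 + Finsupp.single j0 1 := by
        ext x
        rw [Finsupp.add_apply, Finsupp.add_apply, he', Finsupp.tsub_apply,
          Finsupp.tsub_apply, Finsupp.single_apply, Finsupp.single_apply]
        by_cases hx1 : i0 = x
        · subst hx1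
          by_cases hx2 : j0 = i0
          · have h2 : 2 ≤ e i0 := hkey hx2.symm
            rw [if_pos rfl, if_pos hx2]
            omega
          · rw [if_pos rfl, if_neg hx2]
            omega
        · by_cases hx2 : j0 = x
          · subst hx2
            rw [if_neg hx1, if_pos rfl]
            omega
          · rw [if_neg hx1, if_neg hx2]
            omega
      set ia : Fin (d+1) := ⟨i0.val - 1, by omega⟩ with hia
      set jb : Fin (d+1) := ⟨j0.val + 1, by omega⟩ with hjb
      obtain ⟨f2, hf2⟩ : ∃ f2, f2 = e' + Finsupp.single ia 1 + Finsupp.single jb 1 := ⟨_, rfl⟩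
      have hiav : ia.val = i0.val - 1 := by rw [hia]
      have hjbv : jb.val = j0.val + 1 := by rw [hjb]
      have hdegf2 : degE d f2 = degE d e := by
        conv_rhs => rw [he]
        rw [hf2]
        simp only [degE, wsum_add, wsum_single]
      have hwtf2 : wtE d f2 = wtE d e := by
        conv_rhs => rw [he]
        rw [hf2]
        simp only [wtE, wsum_add, wsum_single, hiav, hjbv]
        omega
      have hphif2 : phiE d f2 ≤ N := by
        have h1 : phiE d e = phiE d e' + 1 * (i0.val * (d - i0.val))
            + 1 * (j0.val * (d - j0.val)) := by
          conv_lhs => rw [he]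
          simp only [phiE, wsum_add, wsum_single]
        have h2 : phiE d f2 = phiE d e' + 1 * ((i0.val - 1) * (d - (i0.val - 1)))
            + 1 * ((j0.val + 1) * (d - (j0.val + 1))) := by
          rw [hf2]
          simp only [phiE, wsum_add, wsum_single, hiav, hjbv]
        have h3 := step_ineq d i0.val j0.val hiv1 hijv hjv2
        omega
      -- the witness minor
      have hmem : (monomial e 1 : MvPolynomial (Fin (d+1)) ℂ) - monomial f2 1 ∈ J d := by
        set s : Fin 2 → Fin d := ![⟨i0.val - 1, by omega⟩, ⟨j0.val, by omega⟩] with hsdef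
        have h01 : s 0 < s 1 := by
          rw [hsdef]
          show (⟨i0.val - 1, _⟩ : Fin d) < ⟨j0.val, _⟩
          rw [Fin.mk_lt_mk]
          omega
        have hs : StrictMono s := by
          intro a b hab
          have hab' : a.val < b.val := hab
          have hbb := b.isLt
          rw [show a = 0 from Fin.ext (by simp only [Fin.val_zero]; omega),
            show b = 1 from Fin.ext (by simp only [Fin.val_one]; omega)]
          exact h01
        have hgen : ((stdMatrix d).submatrix id s).det ∈ J d :=
          Ideal.subset_span ⟨s, hs, rfl⟩
        have hdet : ((stdMatrix d).submatrix id s).det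
            = X ia * X jb - X j0 * X i0 := by
          rw [Matrix.det_fin_two]
          have e00 : (stdMatrix d).submatrix id s 0 0 = X ia := by
            show (stdMatrix d) 0 (s 0) = X ia
            rw [stdMatrix]
            show X (⟨(s 0).val, _⟩ : Fin (d+1)) = X ia
            congr 1
          have e11 : (stdMatrix d).submatrix id s 1 1 = X jb := by
            show (stdMatrix d) 1 (s 1) = X jb
            rw [stdMatrix]
            show X (⟨(s 1).val + 1, _⟩ : Fin (d+1)) = X jb
            congr 1
          have e01 : (stdMatrix d).submatrix id s 0 1 = X j0 := by
            show (stdMatrix d) 0 (s 1) = X j0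
            rw [stdMatrix]
            show X (⟨(s 1).val, _⟩ : Fin (d+1)) = X j0
            congr 1
          have e10 : (stdMatrix d).submatrix id s 1 0 = X i0 := by
            show (stdMatrix d) 1 (s 0) = X i0
            rw [stdMatrix]
            show X (⟨(s 0).val + 1, _⟩ : Fin (d+1)) = X i0
            congr 1
            exact Fin.ext (by show i0.val - 1 + 1 = i0.val; omega)
          rw [e00, e11, e01, e10]
        have hfact : (monomial e 1 : MvPolynomial (Fin (d+1)) ℂ) - monomial f2 1
            = monomial e' 1 * -(((stdMatrix d).submatrix id s).det) := by
          rw [hdet, he, hf2]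
          rw [← monomial_mul_X, ← monomial_mul_X, ← monomial_mul_X, ← monomial_mul_X]
          ring
        rw [hfact]
        exact Ideal.mul_mem_left _ _ (neg_mem hgen)
      have hrest : (monomial f2 1 : MvPolynomial (Fin (d+1)) ℂ)
          - monomial (nf d hd (degE d e) (wtE d e)) 1 ∈ J d := by
        rw [← hdegf2, ← hwtf2]
        exact ih f2 hphif2
      have : (monomial e 1 : MvPolynomial (Fin (d+1)) ℂ)
          - monomial (nf d hd (degE d e) (wtE d e)) 1
          = ((monomial e 1 : MvPolynomial (Fin (d+1)) ℂ) - monomial f2 1)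
            + ((monomial f2 1 : MvPolynomial (Fin (d+1)) ℂ)
              - monomial (nf d hd (degE d e) (wtE d e)) 1) := by ring
      rw [this]
      exact Ideal.add_mem _ hmem hrest

lemma psi_monomial (hd : 0 < d) (v : Fin (d+1) →₀ ℕ) (c : ℂ) :
    psi d (monomial v c)
      = monomial (Finsupp.single 0 (degE d v) + Finsupp.single 1 (wtE d v)) c := by
  rw [psi, aeval_monomial]
  rw [Finsupp.prod_fintype _ _ (fun i => pow_zero _)]
  have hstep : ∀ i : Fin (d+1), (X 0 * X 1 ^ i.val : MvPolynomial (Fin 2) ℂ) ^ (v i)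
      = X 0 ^ (v i) * X 1 ^ (v i * i.val) := by
    intro i
    rw [mul_pow, ← pow_mul, Nat.mul_comm i.val (v i)]
  rw [Finset.prod_congr rfl (fun i _ => hstep i), Finset.prod_mul_distrib,
    Finset.prod_pow_eq_pow_sum, Finset.prod_pow_eq_pow_sum]
  have hdeg : degE d v = ∑ i, v i := by simp [degE, wsum]
  have hwt : wtE d v = ∑ i, v i * i.val := rfl
  rw [hdeg, hwt, X_pow_eq_monomial, X_pow_eq_monomial, monomial_mul, one_mul,
    algebraMap_eq, C_mul_monomial, mul_one]

lemma single_pair_eq (a b a' b' : ℕ) :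
    (Finsupp.single (0 : Fin 2) a + Finsupp.single 1 b
      = Finsupp.single 0 a' + Finsupp.single 1 b') ↔ (a = a' ∧ b = b') := by
  constructor
  · intro H
    have h0 := Finsupp.ext_iff.mp H 0
    have h1 := Finsupp.ext_iff.mp H 1
    simp [Finsupp.single_apply, Fin.ext_iff] at h0 h1
    exact ⟨h0, h1⟩
  · rintro ⟨rfl, rfl⟩
    rfl

/-- Hard direction: the kernel of `ψ` is contained in `J`. -/
lemma ker_le_J (hd : 0 < d) : RingHom.ker (psi d).toRingHom ≤ J d := by
  intro f hf
  rw [RingHom.mem_ker] at hf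
  obtain ⟨h, hh⟩ : ∃ h, h = ∑ e ∈ f.support,
      (monomial (nf d hd (degE d e) (wtE d e)) (coeff e f)
        : MvPolynomial (Fin (d+1)) ℂ) := ⟨_, rfl⟩
  have hfh : f - h ∈ J d := by
    have key : f - h = ∑ e ∈ f.support,
        ((monomial e (coeff e f) : MvPolynomial (Fin (d+1)) ℂ)
          - monomial (nf d hd (degE d e) (wtE d e)) (coeff e f)) := by
      rw [Finset.sum_sub_distrib, support_sum_monomial_coeff, ← hh]
    rw [key]
    apply Ideal.sum_mem
    intro e _
    have hsplit : (monomial e (coeff e f) : MvPolynomial (Fin (d+1)) ℂ)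
        - monomial (nf d hd (degE d e) (wtE d e)) (coeff e f)
        = C (coeff e f) * (monomial e 1 - monomial (nf d hd (degE d e) (wtE d e)) 1) := by
      rw [mul_sub, C_mul_monomial, C_mul_monomial, mul_one]
    rw [hsplit]
    exact Ideal.mul_mem_left _ _ (reduce d hd (phiE d e) e le_rfl)
  have hf' : psi d f = 0 := hf
  have hpsih : psi d h = 0 := by
    have h1 := J_le_ker d hfh
    rw [RingHom.mem_ker] at h1
    have h2 : psi d f - psi d h = 0 := by
      rw [← map_sub]
      exact h1
    rw [hf'] at h2
    have := sub_eq_zero.mp h2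
    exact this.symm
  have hpsih2 : psi d h = ∑ e ∈ f.support,
      (monomial (Finsupp.single 0 (degE d e) + Finsupp.single 1 (wtE d e))
        (coeff e f) : MvPolynomial (Fin 2) ℂ) := by
    rw [hh, map_sum]
    apply Finset.sum_congr rfl
    intro e _
    rw [psi_monomial d hd, degE_nf d hd _ _ (wtE_le d e), wtE_nf d hd _ _ (wtE_le d e)]
  have hzero : h = 0 := by
    ext u
    rw [coeff_zero, hh, MvPolynomial.coeff_sum]
    simp only [coeff_monomial]
    by_cases hex : ∃ e0 ∈ f.support, nf d hd (degE d e0) (wtE d e0) = u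
    · obtain ⟨e0, he0, hu⟩ := hex
      have hcoeff : coeff (Finsupp.single 0 (degE d e0) + Finsupp.single 1 (wtE d e0))
          (psi d h) = 0 := by
        rw [hpsih, coeff_zero]
      rw [hpsih2, MvPolynomial.coeff_sum] at hcoeff
      simp only [coeff_monomial] at hcoeff
      have hsum : (∑ e ∈ f.support,
            if nf d hd (degE d e) (wtE d e) = u then coeff e f else 0)
          = ∑ e ∈ f.support,
            if (Finsupp.single (0 : Fin 2) (degE d e) + Finsupp.single 1 (wtE d e))
              = (Finsupp.single 0 (degE d e0) + Finsupp.single 1 (wtE d e0))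
            then coeff e f else 0 := by
        apply Finset.sum_congr rfl
        intro e _
        apply if_congr _ rfl rfl
        constructor
        · intro hEq
          have hne : nf d hd (degE d e) (wtE d e) = nf d hd (degE d e0) (wtE d e0) :=
            hEq.trans hu.symm
          have hd1 : degE d e = degE d e0 := by
            have a1 := degE_nf d hd (degE d e) (wtE d e) (wtE_le d e)
            have a2 := degE_nf d hd (degE d e0) (wtE d e0) (wtE_le d e0)
            rw [← a1, ← a2, hne]
          have hw1 : wtE d e = wtE d e0 := by
            have a1 := wtE_nf d hd (degE d e) (wtE d e) (wtE_le d e)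
            have a2 := wtE_nf d hd (degE d e0) (wtE d e0) (wtE_le d e0)
            rw [← a1, ← a2, hne]
          exact (single_pair_eq (degE d e) (wtE d e) (degE d e0) (wtE d e0)).mpr ⟨hd1, hw1⟩
        · intro hEq
          obtain ⟨h1, h2⟩ :=
            (single_pair_eq (degE d e) (wtE d e) (degE d e0) (wtE d e0)).mp hEq
          rw [h1, h2, hu]
      rw [hsum]
      exact hcoeff
    · push_neg at hex
      apply Finset.sum_eq_zero
      intro e he
      rw [if_neg (hex e he)]
  rw [hzero, sub_zero] at hfh
  exact hfh


lemma J_eq_ker (hd : 0 < d) : J d = RingHom.ker (psi d).toRingHom :=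
  le_antisymm (J_le_ker d) (ker_le_J d hd)

lemma chiSqIdeal_eq_ker (hd : 0 < d) :
    chiSqIdeal d = RingHom.ker ((psi d).toRingHom.comp (tau d).toRingHom) := by
  apply le_antisymm
  · rw [chiSqIdeal_eq_map, Ideal.map_le_iff_le_comap]
    intro x hx
    rw [Ideal.mem_comap, RingHom.mem_ker]
    show psi d (tau d (sigm d x)) = 0
    rw [tau_sigm]
    exact RingHom.mem_ker.mp (J_le_ker d hx)
  · intro x hx
    rw [RingHom.mem_ker] at hx
    have : tau d x ∈ J d := by
      rw [J_eq_ker d hd, RingHom.mem_ker]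
      exact hx
    have h2 : sigm d (tau d x) ∈ Ideal.map (sigm d) (J d) := Ideal.mem_map_of_mem _ this
    rwa [sigm_tau, ← chiSqIdeal_eq_map] at h2

lemma eval_point (t k : ℂ) (f : MvPolynomial (Fin (d + 1)) ℂ) :
    eval (fun i : Fin (d + 1) =>
        t * ∏ j ∈ Finset.range i.val, (k + 2 * (j : ℂ))) f
      = eval ![t, k] (psi d (tau d f)) := by
  have : (eval ![t, k]).comp ((psi d).toRingHom.comp (tau d).toRingHom)
      = eval (fun i : Fin (d + 1) =>
        t * ∏ j ∈ Finset.range i.val, (k + 2 * (j : ℂ))) := by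
    apply MvPolynomial.ringHom_ext
    · intro c
      simp [psi, tau]
    · intro j
      show eval ![t, k] (psi d (tau d (X j))) = _
      simp only [tau, aeval_X, map_sum, map_mul, psi, aeval_C, algebraMap_eq, eval_C]
      simp only [map_mul, map_pow, eval_X, eval_mul, eval_pow]
      have h1 : ∀ i : Fin (d+1), eval ![t,k] ((C (chiSqCoeffMatrix d j i) : MvPolynomial (Fin 2) ℂ)) = chiSqCoeffMatrix d j i := fun i => eval_C _
      have hx0 : (![t, k] : Fin 2 → ℂ) 0 = t := rfl
      have hx1 : (![t, k] : Fin 2 → ℂ) 1 = k := rfl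
      simp only [eval_C, hx0, hx1]
      have hprod : ∏ j' ∈ Finset.range j.val, (k + 2 * (j' : ℂ))
          = Polynomial.eval k (chiSqMomentPoly j.val) := by
        rw [chiSqMomentPoly, Polynomial.eval_prod]
        simp
      rw [hprod, Polynomial.eval_eq_sum_range' (n := d + 1)
        (by rw [chiSqMomentPoly_natDegree]; omega) k]
      rw [← Fin.sum_univ_eq_sum_range (fun i => (chiSqMomentPoly j.val).coeff i * k ^ i)]
      rw [Finset.mul_sum]
      apply Finset.sum_congr rfl
      intro i _
      rw [show chiSqCoeffMatrix d j i = (chiSqMomentPoly j.val).coeff i.val from rfl]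
      ring
  rw [← this]
  rfl

end ChiSqAux

open ChiSqAux

/-- `A` is invertible, and the ideal of `2 × 2` minors of the matrix of linear forms
`ℓ_j` is prime and equals the vanishing ideal of the affine cone
`{ t·(p₀(k), …, p_d(k)) : t, k ∈ ℂ }` over the chi-squared moment parameterization;
in particular the chi-squared moment variety is a rational normal curve. -/
theorem chiSq_momentVariety (d : ℕ) (hd : 2 ≤ d) :
    IsUnit (chiSqCoeffMatrix d).det ∧
      (chiSqIdeal d).IsPrime ∧
      ∀ f : MvPolynomial (Fin (d + 1)) ℂ,
        (∀ t k : ℂ,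
            eval (fun i : Fin (d + 1) =>
              t * ∏ j ∈ Finset.range i.val, (k + 2 * (j : ℂ))) f = 0) ↔
          f ∈ chiSqIdeal d := by
  have hd0 : 0 < d := by omega
  refine ⟨chiSq_isUnit_det d, ?_, ?_⟩
  · rw [chiSqIdeal_eq_ker d hd0]
    exact RingHom.ker_isPrime _
  · intro f
    constructor
    · intro hev
      rw [chiSqIdeal_eq_ker d hd0, RingHom.mem_ker]
      show psi d (tau d f) = 0
      apply MvPolynomial.funext
      intro x
      rw [map_zero]
      have := hev (x 0) (x 1)
      rw [eval_point d (x 0) (x 1) f] at this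
      have hxx : (![x 0, x 1] : Fin 2 → ℂ) = x := by
        funext i
        fin_cases i <;> rfl
      rwa [hxx] at this
    · intro hf t k
      rw [chiSqIdeal_eq_ker d hd0, RingHom.mem_ker] at hf
      rw [eval_point d t k f]
      show eval ![t,k] (psi d (tau d f)) = 0
      rw [show psi d (tau d f) = 0 from hf, map_zero]
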